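/- arXiv:2412.04816 — 5 statements merged into one kernel-verified Lean document; each statement's English description precedes it below -/
import Mathlib

section
/- (Cambanis–Simons–Stout upper bound) For any two real random variables X and Y with finite second moments and cdfs F_X and F_Y, and any coupling (X̃, Ỹ) with these marginals, E[X̃ Ỹ] ≤ E[F_X^{-1}(U) F_Y^{-1}(U)] where U ~ Uniform[0,1]. Moreover the bound is attained by the coupling (F_X^{-1}(U), F_Y^{-1}(U)). -/
/-!
For `s ∈ ℝ` let `layer a s = 1{s < a} - 1{s < 0}`, so that `∫ layer a s ds = a`. By Fubini,
`∫ x y dπ = ∫∫ (∫ layer x s * layer y t dπ) ds dt`, and the inner integral is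
`π(X > s, Y > t)` plus terms that only depend on the marginals of `π`. So among couplings
of `μ` and `ν`, `∫ x y dπ` is monotone in the orthant probabilities `π(X > s, Y > t)`.
Each of them is at most `min (μ (s, ∞)) (ν (t, ∞))`, and the quantile coupling attains all
these bounds at once, because `s < F_X⁻¹(u) ↔ F_X(s) < u` for `u ∈ (0, 1)`.
-/

open MeasureTheory Set Filter

/-- Generalized inverse (quantile function) of the cdf of a measure `μ` on `ℝ`. -/
noncomputable def qf (μ : Measure ℝ) (t : ℝ) : ℝ :=
  sInf {x | t ≤ (μ (Set.Iic x)).toReal}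

open ProbabilityTheory

theorem MeasureTheory.Measure.ext_of_Ioi {α : Type*} [TopologicalSpace α] [MeasurableSpace α]
    [SecondCountableTopology α] [LinearOrder α] [OrderTopology α] [BorelSpace α]
    (μ ν : Measure α) [IsProbabilityMeasure μ] [IsProbabilityMeasure ν]
    (h : ∀ a, μ (Ioi a) = ν (Ioi a)) : μ = ν :=
  ext_of_Iic μ ν fun a => by
    rw [← compl_Ioi, prob_compl_eq_one_sub measurableSet_Ioi,
      prob_compl_eq_one_sub measurableSet_Ioi, h]

theorem MeasureTheory.Measure.prod_le_min_fst_snd {α β : Type*} [MeasurableSpace α]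
    [MeasurableSpace β] (π : Measure (α × β)) {s : Set α} {t : Set β} (hs : MeasurableSet s)
    (ht : MeasurableSet t) : π (s ×ˢ t) ≤ min (π.fst s) (π.snd t) :=
  le_min (by rw [Measure.fst_apply hs]; exact measure_mono fun _ hp => hp.1)
    (by rw [Measure.snd_apply ht]; exact measure_mono fun _ hp => hp.2)

lemma measure_Ioi_eq_ofReal_one_sub_cdf (μ : Measure ℝ) [IsProbabilityMeasure μ] (x : ℝ) :
    μ (Ioi x) = ENNReal.ofReal (1 - cdf μ x) := by
  rw [← compl_Iic, prob_compl_eq_one_sub measurableSet_Iic, ← ofReal_cdf,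
    ENNReal.ofReal_sub _ (cdf_nonneg μ x), ENNReal.ofReal_one]

lemma integrable_fst_mul_snd_of_integrable_sq {π : Measure (ℝ × ℝ)}
    (h₁ : Integrable (fun x => x ^ 2) π.fst) (h₂ : Integrable (fun y => y ^ 2) π.snd) :
    Integrable (fun p => p.1 * p.2) π := by
  have h₁' : Integrable (fun p : ℝ × ℝ => p.1 ^ 2) π :=
    (integrable_map_measure h₁.aestronglyMeasurable measurable_fst.aemeasurable).1 h₁
  have h₂' : Integrable (fun p : ℝ × ℝ => p.2 ^ 2) π :=
    (integrable_map_measure h₂.aestronglyMeasurable measurable_snd.aemeasurable).1 h₂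
  refine ((h₁'.add h₂').div_const 2).mono' (by fun_prop) (ae_of_all _ fun p => ?_)
  show |p.1 * p.2| ≤ (p.1 ^ 2 + p.2 ^ 2) / 2
  rw [abs_mul]
  nlinarith [sq_abs p.1, sq_abs p.2, sq_nonneg (|p.1| - |p.2|)]

noncomputable def layer (a s : ℝ) : ℝ := (if s < a then 1 else 0) - if s < 0 then 1 else 0

lemma measurable_layer : Measurable (Function.uncurry layer) := by
  refine Measurable.sub ?_ ?_ <;> refine Measurable.ite ?_ measurable_const measurable_const
  · exact measurableSet_lt measurable_snd measurable_fst
  · exact measurableSet_lt measurable_snd measurable_const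

lemma layer_eq_indicator_sub (a s : ℝ) :
    layer a s = (Ico 0 a).indicator 1 s - (Ico a 0).indicator 1 s := by
  simp only [layer, indicator, mem_Ico, Pi.one_apply]
  split_ifs <;> grind

lemma abs_layer (a s : ℝ) :
    |layer a s| = (Ico 0 a).indicator 1 s + (Ico a 0).indicator 1 s := by
  simp only [layer, indicator, mem_Ico, Pi.one_apply]
  split_ifs <;> grind

lemma integrable_indicator_Ico_one (a b : ℝ) :
    Integrable ((Ico a b).indicator (1 : ℝ → ℝ)) :=
  (integrableOn_const measure_Ico_lt_top.ne).integrable_indicator measurableSet_Ico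

lemma integrable_layer (a : ℝ) : Integrable (layer a) :=
  ((integrable_indicator_Ico_one 0 a).sub (integrable_indicator_Ico_one a 0)).congr
    (ae_of_all _ fun s => (layer_eq_indicator_sub a s).symm)

lemma integral_layer (a : ℝ) : ∫ s, layer a s = a := by
  simp_rw [layer_eq_indicator_sub]
  rw [integral_sub (integrable_indicator_Ico_one 0 a) (integrable_indicator_Ico_one a 0),
    integral_indicator_one measurableSet_Ico, integral_indicator_one measurableSet_Ico,
    Real.volume_real_Ico, Real.volume_real_Ico, sub_zero, zero_sub,
    max_zero_sub_max_neg_zero_eq_self]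

lemma integral_abs_layer (a : ℝ) : ∫ s, |layer a s| = |a| := by
  simp_rw [abs_layer]
  rw [integral_add (integrable_indicator_Ico_one 0 a) (integrable_indicator_Ico_one a 0),
    integral_indicator_one measurableSet_Ico, integral_indicator_one measurableSet_Ico,
    Real.volume_real_Ico, Real.volume_real_Ico, sub_zero, zero_sub,
    max_zero_add_max_neg_zero_eq_abs_self]

lemma integral_layer_mul_layer (a b : ℝ) :
    ∫ q : ℝ × ℝ, layer a q.1 * layer b q.2 = a * b := by
  rw [Measure.volume_eq_prod, integral_prod_mul, integral_layer, integral_layer]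

lemma integral_norm_layer_mul_layer (a b : ℝ) :
    ∫ q : ℝ × ℝ, ‖layer a q.1 * layer b q.2‖ = |a * b| := by
  simp_rw [norm_mul, Real.norm_eq_abs]
  rw [Measure.volume_eq_prod, integral_prod_mul (fun s => |layer a s|) (fun s => |layer b s|),
    integral_abs_layer, integral_abs_layer, abs_mul]

lemma integrable_layer_mul_layer (a b : ℝ) :
    Integrable (fun q : ℝ × ℝ => layer a q.1 * layer b q.2) := by
  rw [Measure.volume_eq_prod]
  exact (integrable_layer a).mul_prod (integrable_layer b)

lemma layer_mul_layer_eq (s t : ℝ) (p : ℝ × ℝ) :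
    layer p.1 s * layer p.2 t = (Ioi s ×ˢ Ioi t).indicator 1 p
      - (if t < 0 then 1 else 0) * (Prod.fst ⁻¹' Ioi s).indicator 1 p
      - (if s < 0 then 1 else 0) * (Prod.snd ⁻¹' Ioi t).indicator 1 p
      + (if s < 0 then 1 else 0) * (if t < 0 then 1 else 0) := by
  simp only [layer, indicator, mem_prod, mem_preimage, mem_Ioi, Pi.one_apply]
  split_ifs <;> grind

section Coupling

lemma integral_layer_mul_layer_eq (π : Measure (ℝ × ℝ)) [IsFiniteMeasure π] (s t : ℝ) :
    ∫ p, layer p.1 s * layer p.2 t ∂π = π.real (Ioi s ×ˢ Ioi t)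
      - (if t < 0 then 1 else 0) * π.fst.real (Ioi s)
      - (if s < 0 then 1 else 0) * π.snd.real (Ioi t)
      + (if s < 0 then 1 else 0) * (if t < 0 then 1 else 0) * π.fst.real univ := by
  have hprod : MeasurableSet (Ioi s ×ˢ Ioi t) := measurableSet_Ioi.prod measurableSet_Ioi
  have hfst : MeasurableSet (Prod.fst ⁻¹' Ioi s : Set (ℝ × ℝ)) :=
    measurable_fst measurableSet_Ioi
  have hsnd : MeasurableSet (Prod.snd ⁻¹' Ioi t : Set (ℝ × ℝ)) :=
    measurable_snd measurableSet_Ioi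
  have hind {S : Set (ℝ × ℝ)} (hS : MeasurableSet S) :
      Integrable (S.indicator (1 : ℝ × ℝ → ℝ)) π :=
    (integrable_const (1 : ℝ)).indicator hS
  have h₁ := hind hprod
  have h₂ := (hind hfst).const_mul (if t < 0 then 1 else 0)
  have h₃ := (hind hsnd).const_mul (if s < 0 then 1 else 0)
  simp_rw [layer_mul_layer_eq]
  rw [integral_add, integral_sub, integral_sub, integral_const_mul, integral_const_mul,
    integral_const, integral_indicator_one hprod, integral_indicator_one hfst,
    integral_indicator_one hsnd]
  · simp only [measureReal_def, Measure.fst_apply measurableSet_Ioi,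
      Measure.snd_apply measurableSet_Ioi, Measure.fst_univ, smul_eq_mul]
    ring
  exacts [h₁, h₂, h₁.sub h₂, h₃, (h₁.sub h₂).sub h₃, integrable_const _]

variable {π π' : Measure (ℝ × ℝ)}

lemma integrable_layer_mul_layer_prod [SFinite π] (hπ : Integrable (fun p => p.1 * p.2) π) :
    Integrable (fun z : (ℝ × ℝ) × (ℝ × ℝ) => layer z.1.1 z.2.1 * layer z.1.2 z.2.2)
      (π.prod volume) := by
  have hmeas :
      Measurable fun z : (ℝ × ℝ) × (ℝ × ℝ) => layer z.1.1 z.2.1 * layer z.1.2 z.2.2 :=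
    (measurable_layer.comp (measurable_fst.fst.prodMk measurable_snd.fst)).mul
      (measurable_layer.comp (measurable_fst.snd.prodMk measurable_snd.snd))
  refine (integrable_prod_iff hmeas.aestronglyMeasurable).2
    ⟨ae_of_all _ fun p => integrable_layer_mul_layer p.1 p.2, ?_⟩
  simp_rw [integral_norm_layer_mul_layer]
  exact hπ.abs

lemma integral_fst_mul_snd_eq_integral_layer [SFinite π]
    (hπ : Integrable (fun p => p.1 * p.2) π) :
    ∫ p, p.1 * p.2 ∂π = ∫ q : ℝ × ℝ, ∫ p, layer p.1 q.1 * layer p.2 q.2 ∂π := by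
  calc ∫ p, p.1 * p.2 ∂π
        = ∫ p, (∫ q : ℝ × ℝ, layer p.1 q.1 * layer p.2 q.2) ∂π := by
          simp only [integral_layer_mul_layer]
    _ = _ := integral_integral_swap (integrable_layer_mul_layer_prod hπ)

theorem integral_fst_mul_snd_le_of_measure_Ioi_prod_Ioi_le [IsFiniteMeasure π]
    [IsFiniteMeasure π'] (hfst : π.fst = π'.fst) (hsnd : π.snd = π'.snd)
    (hπ : Integrable (fun p => p.1 * p.2) π) (hπ' : Integrable (fun p => p.1 * p.2) π')
    (hle : ∀ s t, π (Ioi s ×ˢ Ioi t) ≤ π' (Ioi s ×ˢ Ioi t)) :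
    ∫ p, p.1 * p.2 ∂π ≤ ∫ p, p.1 * p.2 ∂π' := by
  rw [integral_fst_mul_snd_eq_integral_layer hπ, integral_fst_mul_snd_eq_integral_layer hπ']
  refine integral_mono (integrable_layer_mul_layer_prod hπ).integral_prod_right
    (integrable_layer_mul_layer_prod hπ').integral_prod_right fun q => ?_
  have hle' : π.real (Ioi q.1 ×ˢ Ioi q.2) ≤ π'.real (Ioi q.1 ×ˢ Ioi q.2) :=
    ENNReal.toReal_mono (measure_ne_top _ _) (hle q.1 q.2)
  rw [integral_layer_mul_layer_eq, integral_layer_mul_layer_eq, hfst, hsnd]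
  linarith

end Coupling

instance : IsProbabilityMeasure (volume.restrict (Ioo (0 : ℝ) 1)) := ⟨by simp⟩

section Quantile

variable (μ : Measure ℝ) [IsProbabilityMeasure μ]

lemma qf_le_iff {u : ℝ} (hu : u ∈ Ioo 0 1) {x : ℝ} : qf μ u ≤ x ↔ u ≤ cdf μ x := by
  have hqf : qf μ u = sInf {x | u ≤ cdf μ x} := by simp only [qf, cdf_eq_real, measureReal_def]
  have hlower {y : ℝ} (hy : cdf μ y < u) : y ∈ lowerBounds {x | u ≤ cdf μ x} := fun z hz =>
    not_lt.1 fun hzy => (hy.trans_le hz).not_ge ((cdf μ).mono hzy.le)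
  have hne : {x | u ≤ cdf μ x}.Nonempty :=
    (((tendsto_cdf_atTop μ).eventually (eventually_gt_nhds hu.2)).exists).imp fun _ => le_of_lt
  obtain ⟨y, hy⟩ := ((tendsto_cdf_atBot μ).eventually (eventually_lt_nhds hu.1)).exists
  rw [hqf]
  refine ⟨fun h => not_lt.1 fun hlt => ?_, fun h => csInf_le ⟨y, hlower hy⟩ h⟩
  obtain ⟨z, hz, hxz⟩ :=
    ((((cdf μ).right_continuous x).eventually (eventually_lt_nhds hlt)).filter_mono
      (nhdsWithin_mono _ Ioi_subset_Ici_self) |>.and self_mem_nhdsWithin).exists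
  exact (h.trans_lt hxz).not_ge (le_csInf hne (hlower hz))

lemma qf_monotoneOn : MonotoneOn (qf μ) (Ioo 0 1) := fun _ hu _ hv huv =>
  (qf_le_iff μ hu).2 (huv.trans ((qf_le_iff μ hv).1 le_rfl))

lemma aemeasurable_qf : AEMeasurable (qf μ) (volume.restrict (Ioo 0 1)) :=
  aemeasurable_restrict_of_monotoneOn measurableSet_Ioo (qf_monotoneOn μ)

lemma qf_preimage_Ioi_inter_Ioo (x : ℝ) : qf μ ⁻¹' Ioi x ∩ Ioo 0 1 = Ioo (cdf μ x) 1 := by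
  ext u
  simp only [mem_inter_iff, mem_preimage, mem_Ioi]
  constructor
  · rintro ⟨hxu, hu⟩
    exact ⟨(lt_iff_lt_of_le_iff_le (qf_le_iff μ hu)).1 hxu, hu.2⟩
  · rintro ⟨hxu, hu₁⟩
    have hu : u ∈ Ioo 0 1 := ⟨(cdf_nonneg μ x).trans_lt hxu, hu₁⟩
    exact ⟨(lt_iff_lt_of_le_iff_le (qf_le_iff μ hu)).2 hxu, hu⟩

lemma map_qf : (volume.restrict (Ioo 0 1)).map (qf μ) = μ := by
  have := Measure.isProbabilityMeasure_map (aemeasurable_qf μ)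
  refine Measure.ext_of_Ioi _ _ fun x => ?_
  rw [Measure.map_apply_of_aemeasurable (aemeasurable_qf μ) measurableSet_Ioi,
    Measure.restrict_apply' measurableSet_Ioo, qf_preimage_Ioi_inter_Ioo, Real.volume_Ioo,
    measure_Ioi_eq_ofReal_one_sub_cdf]

end Quantile

section Comonotone

noncomputable def comonotoneCoupling (μ ν : Measure ℝ) : Measure (ℝ × ℝ) :=
  (volume.restrict (Ioo 0 1)).map fun u => (qf μ u, qf ν u)

variable (μ ν : Measure ℝ) [IsProbabilityMeasure μ] [IsProbabilityMeasure ν]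

lemma aemeasurable_qf_prodMk_qf :
    AEMeasurable (fun u => (qf μ u, qf ν u)) (volume.restrict (Ioo 0 1)) :=
  (aemeasurable_qf μ).prodMk (aemeasurable_qf ν)

lemma comonotoneCoupling_fst : (comonotoneCoupling μ ν).fst = μ := by
  rw [comonotoneCoupling, Measure.fst, AEMeasurable.map_map_of_aemeasurable
    measurable_fst.aemeasurable (aemeasurable_qf_prodMk_qf μ ν)]
  exact map_qf μ

lemma comonotoneCoupling_snd : (comonotoneCoupling μ ν).snd = ν := by
  rw [comonotoneCoupling, Measure.snd, AEMeasurable.map_map_of_aemeasurable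
    measurable_snd.aemeasurable (aemeasurable_qf_prodMk_qf μ ν)]
  exact map_qf ν

instance : IsProbabilityMeasure (comonotoneCoupling μ ν) :=
  Measure.isProbabilityMeasure_map (aemeasurable_qf_prodMk_qf μ ν)

lemma comonotoneCoupling_Ioi_prod_Ioi (s t : ℝ) :
    comonotoneCoupling μ ν (Ioi s ×ˢ Ioi t) = min (μ (Ioi s)) (ν (Ioi t)) := by
  rw [comonotoneCoupling, Measure.map_apply_of_aemeasurable (aemeasurable_qf_prodMk_qf μ ν)
      (measurableSet_Ioi.prod measurableSet_Ioi),
    Measure.restrict_apply' measurableSet_Ioo, mk_preimage_prod, inter_inter_distrib_right,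
    qf_preimage_Ioi_inter_Ioo, qf_preimage_Ioi_inter_Ioo, Ioo_inter_Ioo, min_self,
    Real.volume_Ioo, sub_sup, ENNReal.ofReal_min, measure_Ioi_eq_ofReal_one_sub_cdf,
    measure_Ioi_eq_ofReal_one_sub_cdf]

lemma integral_fst_mul_snd_comonotoneCoupling :
    ∫ p, p.1 * p.2 ∂comonotoneCoupling μ ν = ∫ u in Ioo 0 1, qf μ u * qf ν u :=
  integral_map (aemeasurable_qf_prodMk_qf μ ν) (by fun_prop)

end Comonotone

/-- Cambanis–Simons–Stout upper bound: for any coupling `π` of two square-integrable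
distributions `μ` and `ν` on `ℝ`, `E[X̃ Ỹ] ≤ ∫₀¹ F_X⁻¹(u) F_Y⁻¹(u) du`, and the bound is
attained by the comonotone coupling `(F_X⁻¹(U), F_Y⁻¹(U))` with `U` uniform on `(0,1]`. -/
theorem stmt_1 (μ ν : Measure ℝ) [IsProbabilityMeasure μ] [IsProbabilityMeasure ν]
    (hμ2 : Integrable (fun x => x ^ 2) μ) (hν2 : Integrable (fun y => y ^ 2) ν) :
    (∀ π : Measure (ℝ × ℝ), π.fst = μ → π.snd = ν →
      Integrable (fun p => p.1 * p.2) π →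
      ∫ p, p.1 * p.2 ∂π ≤ ∫ t in Set.Ioc (0:ℝ) 1, qf μ t * qf ν t) ∧
    ∃ π : Measure (ℝ × ℝ),
      π = Measure.map (fun t => (qf μ t, qf ν t)) (volume.restrict (Set.Ioc (0:ℝ) 1)) ∧
      π.fst = μ ∧ π.snd = ν ∧
      ∫ p, p.1 * p.2 ∂π = ∫ t in Set.Ioc (0:ℝ) 1, qf μ t * qf ν t := by
  rw [← Measure.restrict_congr_set Ioo_ae_eq_Ioc, ← integral_fst_mul_snd_comonotoneCoupling]
  have hfst := comonotoneCoupling_fst μ ν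
  have hsnd := comonotoneCoupling_snd μ ν
  refine ⟨fun π h₁ h₂ hπ => ?_, _, rfl, hfst, hsnd, rfl⟩
  have : IsProbabilityMeasure π := ⟨by rw [← Measure.fst_univ, h₁, measure_univ]⟩
  refine integral_fst_mul_snd_le_of_measure_Ioi_prod_Ioi_le (h₁.trans hfst.symm)
    (h₂.trans hsnd.symm) hπ
    (integrable_fst_mul_snd_of_integrable_sq (by rwa [hfst]) (by rwa [hsnd])) fun s t => ?_
  rw [comonotoneCoupling_Ioi_prod_Ioi, ← h₁, ← h₂]
  exact π.prod_le_min_fst_snd measurableSet_Ioi measurableSet_Ioi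
end

section
/- For real random variables X with cdf F and quantile function F^{-1}, if Z = F(X^-) + U·(F(X) - F(X^-)) where U ~ Uniform[0,1] is independent of X and F(X^-) denotes the left limit of F at X, then Z is uniformly distributed on [0,1]. -/
/-!
For `0 < t < 1` let `q` be the `t`-quantile of `F`, so that `F x < t` for `x < q` and
`F(q⁻) ≤ t ≤ F q`. Given `X = x`, the value of `Z` lies in `[F(x⁻), F x]`, so `Z < t` surely
when `X < q` and never when `X > q`. On the atom `{q}`, of mass `F q - F(q⁻)`, the independent
uniform `U` gives `Z < t` with probability `(t - F(q⁻)) / (F q - F(q⁻))`. Hence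
`P(Z < t) = F(q⁻) + (t - F(q⁻)) = t`.
-/

open MeasureTheory Set Filter

open Topology Function

instance isProbabilityMeasure_volume_restrict_unitInterval :
    IsProbabilityMeasure (volume.restrict (Icc (0 : ℝ) 1)) :=
  ⟨by simp⟩

theorem MeasureTheory.Measure.ext_of_Iio_of_isProbabilityMeasure {α : Type*} [TopologicalSpace α]
    [MeasurableSpace α] [SecondCountableTopology α] [LinearOrder α] [OrderTopology α]
    [BorelSpace α] (μ ν : Measure α) [IsProbabilityMeasure μ] [IsProbabilityMeasure ν]
    (h : ∀ a, μ (Iio a) = ν (Iio a)) : μ = ν :=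
  Measure.ext_of_Ici μ ν fun a => by
    rw [← compl_Iio, prob_compl_eq_one_sub measurableSet_Iio,
      prob_compl_eq_one_sub measurableSet_Iio, h]

theorem volume_restrict_unitInterval_Iio (c : ℝ) :
    volume.restrict (Icc (0 : ℝ) 1) (Iio c) = ENNReal.ofReal (min c 1) := by
  have h : Iic c ∩ Icc 0 1 = Icc 0 (min c 1) := by
    ext u
    simp only [mem_inter_iff, mem_Iic, mem_Icc, le_min_iff]
    tauto
  rw [measure_congr Iio_ae_eq_Iic, Measure.restrict_apply measurableSet_Iic, h, Real.volume_Icc,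
    sub_zero]

section Affine

variable {a b t : ℝ}

theorem volume_restrict_unitInterval_affine_lt_of_lt (hab : a ≤ b) (hbt : b < t) :
    volume.restrict (Icc (0 : ℝ) 1) {u | a + u * (b - a) < t} = 1 := by
  rw [Measure.restrict_apply' measurableSet_Icc, inter_eq_right.2, Real.volume_Icc]
  · simp
  · intro u hu
    simp only [mem_ofPred_eq]
    nlinarith [hu.1, hu.2]

theorem volume_restrict_unitInterval_affine_lt_of_le (hab : a ≤ b) (hta : t ≤ a) :
    volume.restrict (Icc (0 : ℝ) 1) {u | a + u * (b - a) < t} = 0 := by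
  rw [Measure.restrict_apply' measurableSet_Icc, (disjoint_left.2 _).inter_eq, measure_empty]
  intro u hu hu'
  simp only [mem_ofPred_eq] at hu
  nlinarith [hu'.1]

theorem ofReal_mul_volume_restrict_unitInterval_affine_lt (hat : a ≤ t) (htb : t ≤ b) :
    ENNReal.ofReal (b - a) * volume.restrict (Icc (0 : ℝ) 1) {u | a + u * (b - a) < t}
      = ENNReal.ofReal (t - a) := by
  rcases hat.eq_or_lt with rfl | hat
  · rw [volume_restrict_unitInterval_affine_lt_of_le htb le_rfl, mul_zero, sub_self,
      ENNReal.ofReal_zero]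
  have hab : 0 < b - a := by linarith
  have hslice : {u | a + u * (b - a) < t} = Iio ((t - a) / (b - a)) := by
    ext u
    simp only [mem_ofPred_eq, mem_Iio, lt_div_iff₀ hab]
    constructor <;> intro <;> linarith
  rw [hslice, volume_restrict_unitInterval_Iio, min_eq_left ((div_le_one hab).2 (by linarith)),
    ← ENNReal.ofReal_mul hab.le, mul_div_cancel₀ _ hab.ne']

end Affine

theorem StieltjesFunction.exists_quantile (F : StieltjesFunction ℝ) {t : ℝ}
    (hlow : ∃ x, F x < t) (hup : ∃ x, t ≤ F x) : ∃ q, (∀ x < q, F x < t) ∧ t ≤ F q := by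
  obtain ⟨x₀, hx₀⟩ := hlow
  have hbdd : BddBelow {x | t ≤ F x} :=
    ⟨x₀, fun s hs => le_of_not_gt fun hsx => (hx₀.trans_le hs).not_ge (F.mono hsx.le)⟩
  refine ⟨sInf {x | t ≤ F x}, fun x hx => not_le.1 (notMem_of_lt_csInf hx hbdd :), ?_⟩
  have hright : ∀ᶠ x in 𝓝[>] sInf {x | t ≤ F x}, t ≤ F x := by
    filter_upwards [self_mem_nhdsWithin] with x hx
    obtain ⟨s, hs, hsx⟩ := exists_lt_of_csInf_lt hup hx
    exact (show t ≤ F s from hs).trans (F.mono hsx.le)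
  exact ge_of_tendsto ((F.right_continuous _).tendsto.mono_left
    (nhdsWithin_mono _ Ioi_subset_Ici_self)) hright

namespace ProbabilityTheory

theorem ofReal_leftLim_cdf (μ : Measure ℝ) [IsProbabilityMeasure μ] (x : ℝ) :
    ENNReal.ofReal (leftLim (cdf μ) x) = μ (Iio x) := by
  conv_rhs => rw [← measure_cdf μ]
  rw [(cdf μ).measure_Iio (tendsto_cdf_atBot μ), sub_zero]

theorem leftLim_cdf_nonneg (μ : Measure ℝ) (x : ℝ) : 0 ≤ leftLim (cdf μ) x :=
  (cdf_nonneg μ (x - 1)).trans ((monotone_cdf μ).le_leftLim (sub_one_lt x))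

theorem leftLim_cdf_eq_real (μ : Measure ℝ) [IsProbabilityMeasure μ] (x : ℝ) :
    leftLim (cdf μ) x = μ.real (Iio x) := by
  rw [measureReal_def, ← ofReal_leftLim_cdf, ENNReal.toReal_ofReal (leftLim_cdf_nonneg μ x)]

theorem measure_singleton_eq_ofReal_cdf_sub_leftLim (μ : Measure ℝ) [IsProbabilityMeasure μ]
    (x : ℝ) : μ {x} = ENNReal.ofReal (cdf μ x - leftLim (cdf μ) x) := by
  conv_lhs => rw [← measure_cdf μ]
  exact (cdf μ).measure_singleton x

noncomputable def distribTransform (μ : Measure ℝ) (x u : ℝ) : ℝ :=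
  leftLim (cdf μ) x + u * (cdf μ x - leftLim (cdf μ) x)

theorem measurable_distribTransform (μ : Measure ℝ) : Measurable (uncurry (distribTransform μ)) :=
  have hF := (monotone_cdf μ).measurable.comp measurable_fst
  have hG := (monotone_cdf μ).leftLim.measurable.comp measurable_fst
  hG.add (measurable_snd.mul (hF.sub hG))

theorem lintegral_volume_restrict_distribTransform_lt (μ : Measure ℝ) [IsProbabilityMeasure μ]
    {t q : ℝ} (hlt : ∀ x < q, cdf μ x < t) (hle : t ≤ cdf μ q) :
    ∫⁻ x, volume.restrict (Icc (0 : ℝ) 1) {u | distribTransform μ x u < t} ∂μ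
      = ENNReal.ofReal t := by
  set ν := volume.restrict (Icc (0 : ℝ) 1)
  have hleftLim : leftLim (cdf μ) q ≤ t := le_of_tendsto ((monotone_cdf μ).tendsto_leftLim q)
    (eventually_nhdsWithin_of_forall fun x hx => (hlt x hx).le)
  have hslice : ∀ x, ν {u | distribTransform μ x u < t}
      = (Iio q).indicator 1 x + ({q} : Set ℝ).indicator
          (fun _ => ν {u | distribTransform μ q u < t}) x := by
    intro x
    have hGF := (monotone_cdf μ).leftLim_le (le_refl x)
    rcases lt_trichotomy x q with hx | rfl | hx
    · rw [indicator_of_mem (mem_Iio.2 hx), indicator_of_notMem (mem_singleton_iff.not.2 hx.ne),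
        Pi.one_apply, add_zero]
      exact volume_restrict_unitInterval_affine_lt_of_lt hGF (hlt x hx)
    · rw [indicator_of_notMem self_notMem_Iio, indicator_of_mem (mem_singleton x), zero_add]
    · rw [indicator_of_notMem (notMem_Iio.2 hx.le),
        indicator_of_notMem (mem_singleton_iff.not.2 hx.ne'), add_zero]
      exact volume_restrict_unitInterval_affine_lt_of_le hGF
        (hle.trans ((monotone_cdf μ).le_leftLim hx))
  rw [lintegral_congr hslice, lintegral_add_left (measurable_one.indicator measurableSet_Iio),
    lintegral_indicator_one measurableSet_Iio, lintegral_indicator_const (measurableSet_singleton q),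
    measure_singleton_eq_ofReal_cdf_sub_leftLim, mul_comm]
  dsimp only [distribTransform]
  rw [ofReal_mul_volume_restrict_unitInterval_affine_lt hleftLim hle, ← ofReal_leftLim_cdf,
    ← ENNReal.ofReal_add (leftLim_cdf_nonneg μ q) (sub_nonneg.2 hleftLim), add_sub_cancel]

theorem map_prod_distribTransform_Iio (μ : Measure ℝ) [IsProbabilityMeasure μ] (t : ℝ) :
    (μ.prod (volume.restrict (Icc (0 : ℝ) 1))).map (uncurry (distribTransform μ)) (Iio t)
      = ENNReal.ofReal (min t 1) := by
  rw [Measure.map_apply (measurable_distribTransform μ) measurableSet_Iio,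
    Measure.prod_apply (measurable_distribTransform μ measurableSet_Iio)]
  change ∫⁻ x, volume.restrict (Icc (0 : ℝ) 1) {u | distribTransform μ x u < t} ∂μ = _
  have hGF x := (monotone_cdf μ).leftLim_le (le_refl x)
  rcases le_or_gt t 0 with ht0 | ht0
  · have hzero x : volume.restrict (Icc (0 : ℝ) 1) {u | distribTransform μ x u < t} = 0 :=
      volume_restrict_unitInterval_affine_lt_of_le (hGF x) (ht0.trans (leftLim_cdf_nonneg μ x))
    simp [hzero, ENNReal.ofReal_eq_zero.2 ((min_le_left t 1).trans ht0)]
  by_cases hup : ∃ x, t ≤ cdf μ x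
  · have hlow : ∃ x, cdf μ x < t := ((tendsto_cdf_atBot μ).eventually (gt_mem_nhds ht0)).exists
    obtain ⟨q, hlt, hle⟩ := (cdf μ).exists_quantile hlow hup
    rw [lintegral_volume_restrict_distribTransform_lt μ hlt hle,
      min_eq_left (hle.trans (cdf_le_one μ q))]
  · push Not at hup
    have hone x : volume.restrict (Icc (0 : ℝ) 1) {u | distribTransform μ x u < t} = 1 :=
      volume_restrict_unitInterval_affine_lt_of_lt (hGF x) (hup x)
    have ht1 : 1 ≤ t := le_of_tendsto' (tendsto_cdf_atTop μ) fun x => (hup x).le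
    simp [hone, min_eq_right ht1]

theorem map_prod_distribTransform (μ : Measure ℝ) [IsProbabilityMeasure μ] :
    (μ.prod (volume.restrict (Icc (0 : ℝ) 1))).map (uncurry (distribTransform μ))
      = volume.restrict (Icc (0 : ℝ) 1) :=
  have := Measure.isProbabilityMeasure_map (μ := μ.prod (volume.restrict (Icc (0 : ℝ) 1)))
    (measurable_distribTransform μ).aemeasurable
  Measure.ext_of_Iio_of_isProbabilityMeasure _ _ fun t => by
    rw [map_prod_distribTransform_Iio, volume_restrict_unitInterval_Iio]

end ProbabilityTheory

/-- Distributional transform: if `X` has cdf `F` and `U ~ Uniform[0,1]` is independent of `X`,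
then `Z = F(X⁻) + U (F(X) - F(X⁻))` is uniformly distributed on `[0,1]`. -/
theorem stmt_2 {Ω : Type*} [MeasurableSpace Ω] (ℙ : Measure Ω) [IsProbabilityMeasure ℙ]
    (X U : Ω → ℝ) (hX : Measurable X) (hU : Measurable U)
    (hUlaw : Measure.map U ℙ = volume.restrict (Set.Icc (0:ℝ) 1))
    (hindep : ProbabilityTheory.IndepFun X U ℙ) :
    Measure.map (fun ω =>
        (Measure.map X ℙ (Set.Iio (X ω))).toReal
          + U ω * ((Measure.map X ℙ (Set.Iic (X ω))).toReal
              - (Measure.map X ℙ (Set.Iio (X ω))).toReal)) ℙ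
      = volume.restrict (Set.Icc (0:ℝ) 1) := by
  have := Measure.isProbabilityMeasure_map (μ := ℙ) hX.aemeasurable
  rw [← ProbabilityTheory.map_prod_distribTransform (Measure.map X ℙ), ← hUlaw,
    ← (ProbabilityTheory.indepFun_iff_map_prod_eq_prod_map_map hX.aemeasurable
      hU.aemeasurable).1 hindep,
    Measure.map_map (ProbabilityTheory.measurable_distribTransform _) (hX.prodMk hU)]
  congr with ω
  simp only [comp_apply, uncurry_apply_pair, ProbabilityTheory.distribTransform,
    ProbabilityTheory.leftLim_cdf_eq_real, ProbabilityTheory.cdf_eq_real, measureReal_def]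
end

section
/- Let Y and η be real random variables with positive variances, finite second moments, and E[η] = 0. Then E[F_η^{-1}(U) F_Y^{-1}(U)] > 0 where U ~ Uniform[0,1]; that is, the maximal covariance of two non-degenerate distributions, one of which is centered, is strictly positive. -/
/-!
Under the uniform law on `(0, 1)` the quantile functions `q = F_η⁻¹` and `p = F_Y⁻¹` are
nondecreasing and have the laws of `η` and `Y`. As `∫ q = 0` and `q` is not a.e. constant, `q`
changes sign at some `c ∈ (0, 1)`; comonotonicity then gives `q (p - p c) ≥ 0`, and
`∫ q p = ∫ q (p - p c)`. Since `p` is not constant either, `p - p c` has the strict sign of `q`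
on a whole interval at one end of `(0, 1)`, so the integral is strictly positive.
-/

open MeasureTheory Set Filter

-- Closed before the main theorem, whose binder `ℙ` would otherwise parse as this namespace's
-- notation for `volume`.
section

open ProbabilityTheory

local notation "𝕌" => volume.restrict (Ioo (0 : ℝ) 1)

instance isProbabilityMeasure_restrict_Ioo_zero_one : IsProbabilityMeasure 𝕌 :=
  ⟨by simp [Real.volume_Ioo]⟩

section Quantile

variable {ν : Measure ℝ} [IsProbabilityMeasure ν]

theorem qf_le_iff_le_cdf {t : ℝ} (ht : t ∈ Ioo 0 1) {x : ℝ} :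
    qf ν t ≤ x ↔ t ≤ cdf ν x := by
  set S := {y | t ≤ cdf ν y}
  have hqf : qf ν t = sInf S := by simp [qf, S, cdf_eq_real, Measure.real]
  have hne : S.Nonempty := ((tendsto_cdf_atTop ν).eventually_const_le ht.2).exists
  have hbdd : BddBelow S := by
    obtain ⟨y₀, hy₀⟩ := ((tendsto_cdf_atBot ν).eventually_lt_const ht.1).exists
    exact ⟨y₀, fun y hy => le_of_not_gt fun hy' =>
      (hy.trans ((cdf ν).mono hy'.le)).not_gt hy₀⟩
  rw [hqf]
  refine ⟨fun h => ?_, fun h => csInf_le hbdd h⟩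
  refine ge_of_tendsto (((cdf ν).right_continuous x).mono Ioi_subset_Ici_self) ?_
  filter_upwards [self_mem_nhdsWithin] with y hy
  obtain ⟨z, hz, hzy⟩ := (csInf_lt_iff hbdd hne).1 (h.trans_lt hy)
  exact hz.trans ((cdf ν).mono hzy.le)

theorem monotoneOn_qf : MonotoneOn (qf ν) (Ioo 0 1) := by
  intro a ha b hb hab
  rw [qf_le_iff_le_cdf ha]
  exact hab.trans ((qf_le_iff_le_cdf hb).1 le_rfl)

theorem aemeasurable_qf_s4 : AEMeasurable (qf ν) 𝕌 :=
  aemeasurable_restrict_of_monotoneOn measurableSet_Ioo monotoneOn_qf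

theorem map_qf_restrict_Ioo : (𝕌).map (qf ν) = ν := by
  have : IsProbabilityMeasure ((𝕌).map (qf ν)) :=
    Measure.isProbabilityMeasure_map aemeasurable_qf_s4
  refine Measure.ext_of_Iic _ _ fun x => ?_
  have hpre : qf ν ⁻¹' Iic x ∩ Ioo 0 1 = Iic (cdf ν x) ∩ Ioo 0 1 := by
    ext t
    simp only [mem_inter_iff, mem_preimage, mem_Iic]
    exact and_congr_left fun ht => qf_le_iff_le_cdf ht
  rw [Measure.map_apply_of_aemeasurable aemeasurable_qf_s4 measurableSet_Iic,
    Measure.restrict_apply' measurableSet_Ioo, hpre,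
    measure_congr ((ae_eq_refl _).inter Ioo_ae_eq_Ioc), Iic_inter_Ioc_of_le (cdf_le_one ν x),
    Real.volume_Ioc, sub_zero, ofReal_cdf]

theorem identDistrib_qf_map {Ω : Type*} [MeasurableSpace Ω] {μ : Measure Ω}
    [IsProbabilityMeasure μ] {X : Ω → ℝ} (hX : AEMeasurable X μ) :
    IdentDistrib (qf (μ.map X)) X 𝕌 μ :=
  have := Measure.isProbabilityMeasure_map hX
  ⟨aemeasurable_qf_s4, hX, map_qf_restrict_Ioo⟩

end Quantile


section Nonconstant

variable {Ω : Type*} [MeasurableSpace Ω] {μ : Measure Ω} {X : Ω → ℝ} {s : Set Ω}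

theorem variance_eq_zero_of_ae_eq_const [IsProbabilityMeasure μ] {c : ℝ}
    (h : X =ᵐ[μ] fun _ => c) : variance X μ = 0 := by
  rw [variance_congr h]
  simp [variance_eq_integral measurable_const.aemeasurable]

theorem exists_lt_of_variance_ne_zero [IsProbabilityMeasure μ] (hs : ∀ᵐ ω ∂μ, ω ∈ s)
    (hX : variance X μ ≠ 0) : ∃ a ∈ s, ∃ b ∈ s, X a < X b := by
  by_contra! h
  obtain ⟨ω₀, hω₀⟩ := hs.exists
  refine hX (variance_eq_zero_of_ae_eq_const (c := X ω₀) ?_)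
  filter_upwards [hs] with ω hω
  exact le_antisymm (h ω₀ hω₀ ω hω) (h ω hω ω₀ hω₀)

theorem exists_neg_of_integral_eq_zero (hs : ∀ᵐ ω ∂μ, ω ∈ s) (hXi : Integrable X μ)
    (hX_mean : ∫ ω, X ω ∂μ = 0) (hX : variance X μ ≠ 0) : ∃ ω ∈ s, X ω < 0 := by
  by_contra! h
  have hX0 : X =ᵐ[μ] 0 := by
    refine (integral_eq_zero_iff_of_nonneg_ae ?_ hXi).1 hX_mean
    filter_upwards [hs] with ω hω using h ω hω
  exact hX (by rw [variance_congr hX0, variance_zero])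

theorem exists_pos_of_integral_eq_zero (hs : ∀ᵐ ω ∂μ, ω ∈ s) (hXi : Integrable X μ)
    (hX_mean : ∫ ω, X ω ∂μ = 0) (hX : variance X μ ≠ 0) : ∃ ω ∈ s, 0 < X ω := by
  obtain ⟨ω, hω, hneg⟩ := exists_neg_of_integral_eq_zero (X := -X) hs hXi.neg
    (by rw [integral_neg', hX_mean, neg_zero]) (by rwa [variance_neg])
  exact ⟨ω, hω, neg_neg_iff_pos.1 hneg⟩

theorem integral_pos_of_pos_on (hXi : Integrable X μ) (hX_nonneg : 0 ≤ᵐ[μ] X)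
    (hX_pos : ∀ ω ∈ s, 0 < X ω) (hs : μ s ≠ 0) : 0 < ∫ ω, X ω ∂μ := by
  rw [integral_pos_iff_support_of_nonneg_ae hX_nonneg hXi]
  exact (pos_iff_ne_zero.2 hs).trans_le (measure_mono fun ω hω => (hX_pos ω hω).ne')

end Nonconstant

theorem MonotoneOn.exists_sign_change {s : Set ℝ} {q : ℝ → ℝ} (hq : MonotoneOn q s)
    (hs : s.OrdConnected) {a d : ℝ} (ha : a ∈ s) (hqa : q a < 0) (hd : d ∈ s)
    (hqd : 0 < q d) :
    ∃ c ∈ s, (∀ t ∈ s, t < c → q t < 0) ∧ ∀ t ∈ s, c < t → 0 ≤ q t := by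
  set N := {t ∈ s | q t < 0}
  have hN_lt : ∀ t ∈ N, t < d := fun t ht =>
    lt_of_not_ge fun hdt => (hqd.trans_le (hq hd ht.1 hdt)).not_gt ht.2
  have hbdd : BddAbove N := ⟨d, fun t ht => (hN_lt t ht).le⟩
  have hne : N.Nonempty := ⟨a, ha, hqa⟩
  refine ⟨sSup N,
    hs.out ha hd ⟨le_csSup hbdd ⟨ha, hqa⟩, csSup_le hne fun t ht => (hN_lt t ht).le⟩,
    fun t ht htc => ?_, fun t ht hct => ?_⟩
  · obtain ⟨t', ht', htt'⟩ := exists_lt_of_lt_csSup hne htc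
    exact (hq ht ht'.1 htt'.le).trans_lt ht'.2
  · exact le_of_not_gt fun hqt => (le_csSup hbdd ⟨ht, hqt⟩).not_gt hct

theorem restrict_Ioo_zero_one_Ioo_ne_zero {u v : ℝ} (hu : 0 ≤ u) (huv : u < v) (hv : v ≤ 1) :
    𝕌 (Ioo u v) ≠ 0 := by
  rw [Measure.restrict_apply' measurableSet_Ioo,
    inter_eq_left.2 (Ioo_subset_Ioo hu hv), Real.volume_Ioo]
  simpa using huv

theorem exists_Ioo_forall_mul_sub_pos {q p : ℝ → ℝ} (hq : MonotoneOn q (Ioo 0 1))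
    (hp : MonotoneOn p (Ioo 0 1)) {c d a b : ℝ} (hc : c ∈ Ioo 0 1)
    (hq_neg : ∀ t ∈ Ioo (0 : ℝ) 1, t < c → q t < 0) (hd : d ∈ Ioo 0 1) (hqd : 0 < q d)
    (ha : a ∈ Ioo 0 1) (hb : b ∈ Ioo 0 1) (hpab : p a < p b) :
    ∃ u v, 0 ≤ u ∧ u < v ∧ v ≤ 1 ∧ ∀ t ∈ Ioo u v, 0 < q t * (p t - p c) := by
  rcases lt_or_ge (p a) (p c) with hpa | hpa
  · refine ⟨0, min a c, le_rfl, lt_min ha.1 hc.1, (min_le_right _ _).trans hc.2.le,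
      fun t ht => ?_⟩
    have ht01 : t ∈ Ioo (0 : ℝ) 1 := ⟨ht.1, ht.2.trans_le (min_le_right _ _) |>.trans hc.2⟩
    refine mul_pos_of_neg_of_neg (hq_neg t ht01 (ht.2.trans_le (min_le_right _ _))) (sub_neg.2 ?_)
    exact (hp ht01 ha (ht.2.le.trans (min_le_left _ _))).trans_lt hpa
  · refine ⟨max b d, 1, hb.1.le.trans (le_max_left _ _), max_lt hb.2 hd.2, le_rfl,
      fun t ht => ?_⟩
    have ht01 : t ∈ Ioo (0 : ℝ) 1 := ⟨hb.1.trans_le (le_max_left _ _) |>.trans ht.1, ht.2⟩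
    refine mul_pos (hqd.trans_le (hq hd ht01 ((le_max_right _ _).trans ht.1.le))) (sub_pos.2 ?_)
    exact (hpa.trans_lt hpab).trans_le (hp hb ht01 ((le_max_left _ _).trans ht.1.le))

theorem integral_mul_pos_of_monotoneOn {q p : ℝ → ℝ} (hq : MonotoneOn q (Ioo 0 1))
    (hp : MonotoneOn p (Ioo 0 1)) (hq2 : MemLp q 2 𝕌) (hp2 : MemLp p 2 𝕌)
    (hq_mean : ∫ t, q t ∂𝕌 = 0) (hq_var : variance q 𝕌 ≠ 0)
    (hp_var : variance p 𝕌 ≠ 0) :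
    0 < ∫ t, q t * p t ∂𝕌 := by
  have hU : ∀ᵐ t ∂𝕌, t ∈ Ioo (0 : ℝ) 1 := ae_restrict_mem measurableSet_Ioo
  have hqi : Integrable q 𝕌 := hq2.integrable one_le_two
  obtain ⟨a, ha, hqa⟩ := exists_neg_of_integral_eq_zero hU hqi hq_mean hq_var
  obtain ⟨d, hd, hqd⟩ := exists_pos_of_integral_eq_zero hU hqi hq_mean hq_var
  obtain ⟨c, hc, hq_neg, hq_nonneg⟩ := hq.exists_sign_change ordConnected_Ioo ha hqa hd hqd
  have hint : ∫ t, q t * p t ∂𝕌 = ∫ t, q t * (p t - p c) ∂𝕌 := by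
    have hqp : Integrable (fun t => q t * p t) 𝕌 := hq2.integrable_mul hp2
    simp_rw [mul_sub]
    rw [integral_sub hqp (hqi.mul_const _), integral_mul_const, hq_mean,
      zero_mul, sub_zero]
  have hg_nonneg : ∀ t ∈ Ioo (0 : ℝ) 1, 0 ≤ q t * (p t - p c) := by
    intro t ht
    rcases lt_trichotomy t c with htc | rfl | hct
    · exact mul_nonneg_of_nonpos_of_nonpos (hq_neg t ht htc).le (sub_nonpos.2 (hp ht hc htc.le))
    · simp
    · exact mul_nonneg (hq_nonneg t ht hct) (sub_nonneg.2 (hp hc ht hct.le))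
  have hgi : Integrable (fun t => q t * (p t - p c)) 𝕌 :=
    hq2.integrable_mul (hp2.sub (memLp_const _))
  have hg_ae : 0 ≤ᵐ[𝕌] fun t => q t * (p t - p c) := by
    filter_upwards [hU] with t ht using hg_nonneg t ht
  rw [hint]
  obtain ⟨a', ha', b', hb', hpab⟩ := exists_lt_of_variance_ne_zero hU hp_var
  obtain ⟨u, v, hu, huv, hv, hpos⟩ :=
    exists_Ioo_forall_mul_sub_pos hq hp hc hq_neg hd hqd ha' hb' hpab
  exact integral_pos_of_pos_on hgi hg_ae hpos (restrict_Ioo_zero_one_Ioo_ne_zero hu huv hv)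

end

theorem stmt_4_general {Ω : Type*} [MeasurableSpace Ω] (ℙ : Measure Ω) [IsProbabilityMeasure ℙ]
    (Y η : Ω → ℝ)
    (hY2 : MemLp Y 2 ℙ) (hη2 : MemLp η 2 ℙ)
    (hVarY : 0 < ProbabilityTheory.variance Y ℙ)
    (hVarη : 0 < ProbabilityTheory.variance η ℙ)
    (hmean : ∫ ω, η ω ∂ℙ = 0) :
    0 < ∫ t in Set.Ioc (0:ℝ) 1, qf (Measure.map η ℙ) t * qf (Measure.map Y ℙ) t := by
  have hη_meas := hη2.aestronglyMeasurable.aemeasurable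
  have hY_meas := hY2.aestronglyMeasurable.aemeasurable
  have := Measure.isProbabilityMeasure_map hη_meas
  have := Measure.isProbabilityMeasure_map hY_meas
  have hη_law := identDistrib_qf_map hη_meas
  have hY_law := identDistrib_qf_map hY_meas
  rw [setIntegral_congr_set Ioo_ae_eq_Ioc.symm]
  exact integral_mul_pos_of_monotoneOn monotoneOn_qf monotoneOn_qf
    (hη_law.symm.memLp_snd hη2) (hY_law.symm.memLp_snd hY2) (hη_law.integral_eq.trans hmean)
    (hη_law.variance_eq ▸ hVarη.ne') (hY_law.variance_eq ▸ hVarY.ne')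

/-- If `Y` and `η` have positive variances, finite second moments and `E[η] = 0`,
then the maximal covariance `E[F_η⁻¹(U) F_Y⁻¹(U)]` is strictly positive. -/
theorem stmt_4 {Ω : Type*} [MeasurableSpace Ω] (ℙ : Measure Ω) [IsProbabilityMeasure ℙ]
    (Y η : Ω → ℝ) (hY : Measurable Y) (hη : Measurable η)
    (hY2 : MemLp Y 2 ℙ) (hη2 : MemLp η 2 ℙ)
    (hVarY : 0 < ProbabilityTheory.variance Y ℙ)
    (hVarη : 0 < ProbabilityTheory.variance η ℙ)
    (hmean : ∫ ω, η ω ∂ℙ = 0) :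
    0 < ∫ t in Set.Ioc (0:ℝ) 1, qf (Measure.map η ℙ) t * qf (Measure.map Y ℙ) t :=
  stmt_4_general ℙ Y η hY2 hη2 hVarY hVarη hmean
end

section
/- Let X ∈ ℝ^p and Y be square-integrable random variables with E[XX'] nonsingular, observed only through their marginal laws. Define the identified set B = { E[X̃X̃']^{-1} E[X̃Ỹ] : (X̃,Ỹ) a coupling with marginals equal to the laws of X and Y }. Then B is a convex subset of ℝ^p. -/
open MeasureTheory Set Filter

/-- Second-moment matrix `E[X Xᵀ]` of a distribution `μ` on `ℝ^p`. -/
noncomputable def momMat {p : ℕ} (μ : Measure (Fin p → ℝ)) : Matrix (Fin p) (Fin p) ℝ :=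
  Matrix.of fun i j => ∫ x, x i * x j ∂μ

/-- The identified set `B = { E[XXᵀ]⁻¹ E[X̃Ỹ] : (X̃,Ỹ) coupling of the laws of X and Y }`
is convex. -/

theorem stmt_5 {p : ℕ} (μ : Measure (Fin p → ℝ)) (ν : Measure ℝ)
    [IsProbabilityMeasure μ] [IsProbabilityMeasure ν]
    (hμ2 : Integrable (fun x => ‖x‖ ^ 2) μ) (hν2 : Integrable (fun y => y ^ 2) ν)
    (hM : IsUnit (momMat μ).det) :
    Convex ℝ {b : Fin p → ℝ | ∃ π : Measure ((Fin p → ℝ) × ℝ),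
      π.fst = μ ∧ π.snd = ν ∧ (∀ i, Integrable (fun q => q.1 i * q.2) π) ∧
      b = (momMat μ)⁻¹.mulVec (fun i => ∫ q, q.1 i * q.2 ∂π)} := by
  have fst_smul : ∀ (c : ENNReal) (π : Measure ((Fin p → ℝ) × ℝ)), (c • π).fst = c • π.fst :=
    fun c π => Measure.map_smul c π Prod.fst
  have snd_smul : ∀ (c : ENNReal) (π : Measure ((Fin p → ℝ) × ℝ)), (c • π).snd = c • π.snd :=
    fun c π => Measure.map_smul c π Prod.snd
  rintro b₁ ⟨π₁, hf₁, hs₁, hi₁, hb₁⟩ b₂ ⟨π₂, hf₂, hs₂, hi₂, hb₂⟩ a c ha hc hac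
  refine ⟨ENNReal.ofReal a • π₁ + ENNReal.ofReal c • π₂, ?_, ?_, ?_, ?_⟩
  · rw [Measure.fst_add, fst_smul, fst_smul, hf₁, hf₂,
      ← add_smul, ← ENNReal.ofReal_add ha hc, hac, ENNReal.ofReal_one, one_smul]
  · rw [Measure.snd_add, snd_smul, snd_smul, hs₁, hs₂,
      ← add_smul, ← ENNReal.ofReal_add ha hc, hac, ENNReal.ofReal_one, one_smul]
  · intro i
    exact Integrable.add_measure
      ((hi₁ i).smul_measure ENNReal.ofReal_ne_top)
      ((hi₂ i).smul_measure ENNReal.ofReal_ne_top)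
  · have key : (fun i => ∫ q, q.1 i * q.2 ∂(ENNReal.ofReal a • π₁ + ENNReal.ofReal c • π₂))
        = a • (fun i => ∫ q, q.1 i * q.2 ∂π₁) + c • (fun i => ∫ q, q.1 i * q.2 ∂π₂) := by
      funext i
      rw [integral_add_measure ((hi₁ i).smul_measure ENNReal.ofReal_ne_top)
        ((hi₂ i).smul_measure ENNReal.ofReal_ne_top),
        integral_smul_measure, integral_smul_measure,
        ENNReal.toReal_ofReal ha, ENNReal.toReal_ofReal hc]
      simp [smul_eq_mul]
    rw [key, Matrix.mulVec_add, Matrix.mulVec_smul, Matrix.mulVec_smul, hb₁, hb₂]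
end

section
/- Change of variables for quantile integrals: let F, G be cdfs on ℝ, Y = F^{-1}(U) with U ~ Uniform[0,1]. Then ∫₀¹ [1{U ≤ t} − t] G^{-1}(t) dF^{-1}(t) = ∫_{−∞}^{∞} [1{Y ≤ u} − F(u)] G^{-1}(F(u)) du. -/
/-!
For `c ∈ (0,1)` the set `{x | c < F x}` is an upper set with infimum `F⁻¹ c`, so
`{u | p < F u ≤ q}` lies between `(F⁻¹ p, F⁻¹ q)` and `[F⁻¹ p, F⁻¹ q]`. Hence `F` pushes
Lebesgue measure on `{u | 0 < F u < 1}` forward to `dF⁻¹` on `(0,1)`, and the left integral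
becomes `∫ [1{u₀ ≤ F u} − F u] G⁻¹(F u) du` over that set. Right-continuity of `F` gives
`u₀ ≤ F u ↔ F⁻¹ u₀ ≤ u`, and the integrand vanishes where `F u ∈ {0, 1}`.
-/

open MeasureTheory Set Filter

theorem IsUpperSet.Ioi_csInf_subset {α : Type*} [ConditionallyCompleteLinearOrder α]
    {s : Set α} (hs : IsUpperSet s) (hne : s.Nonempty) : Ioi (sInf s) ⊆ s := fun _ hx =>
  let ⟨_, hy, hyx⟩ := exists_lt_of_csInf_lt hne hx
  hs hyx.le hy

theorem IsUpperSet.volume_sdiff {s t : Set ℝ} (hs : IsUpperSet s) (ht : IsUpperSet t)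
    (hts : t ⊆ s) (hbdd : BddBelow s) (hne : t.Nonempty) :
    volume (s \ t) = ENNReal.ofReal (sInf t - sInf s) := by
  have hlower : Ioo (sInf s) (sInf t) ⊆ s \ t := by
    rw [← Ioi_sdiff_Ici]
    exact sdiff_subset_sdiff (hs.Ioi_csInf_subset (hne.mono hts))
      fun _ hx => csInf_le (hbdd.mono hts) hx
  have hupper : s \ t ⊆ Icc (sInf s) (sInf t) := by
    rw [← Ici_sdiff_Ioi]
    exact sdiff_subset_sdiff (fun _ hx => csInf_le hbdd hx) (ht.Ioi_csInf_subset hne)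
  refine le_antisymm ?_ ?_
  · simpa only [Real.volume_Icc] using measure_mono (μ := volume) hupper
  · simpa only [Real.volume_Ioo] using measure_mono (μ := volume) hlower

section GeneralizedInverse

variable {F : ℝ → ℝ}

theorem nonempty_setOf_lt_apply_of_tendsto {l c : ℝ} (hF : Tendsto F atTop (nhds l))
    (hc : c < l) : {x | c < F x}.Nonempty :=
  (hF.eventually (eventually_gt_nhds hc)).exists

theorem bddBelow_setOf_le_apply_of_tendsto (hF : Monotone F) {l c : ℝ}
    (hFl : Tendsto F atBot (nhds l)) (hc : l < c) : BddBelow {x | c ≤ F x} := by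
  obtain ⟨x₀, hx₀⟩ := (hFl.eventually (eventually_lt_nhds hc)).exists
  exact ⟨x₀, fun y hy => le_of_not_gt fun hyx => (hy.trans (hF hyx.le)).not_gt hx₀⟩

theorem csInf_setOf_le_apply_le_iff (hF : Monotone F)
    (hFrc : ∀ x, ContinuousWithinAt F (Ici x) x) {c : ℝ} (hne : {x | c ≤ F x}.Nonempty)
    (hbdd : BddBelow {x | c ≤ F x}) (u : ℝ) : sInf {x | c ≤ F x} ≤ u ↔ c ≤ F u := by
  refine ⟨fun h => ?_, fun h => csInf_le hbdd h⟩
  have hupper : IsUpperSet {x | c ≤ F x} := fun _ _ hxy hx => hx.trans (hF hxy)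
  have hmem : c ≤ F (sInf {x | c ≤ F x}) :=
    ge_of_tendsto ((hFrc _).mono_left (nhdsWithin_mono _ Ioi_subset_Ici_self))
      (eventually_nhdsWithin_of_forall (hupper.Ioi_csInf_subset hne))
  exact hmem.trans (hF h)

theorem monotoneOn_csInf_setOf_le_apply (hF : Monotone F) (hF0 : Tendsto F atBot (nhds 0))
    (hF1 : Tendsto F atTop (nhds 1)) :
    MonotoneOn (fun t => sInf {x | t ≤ F x}) (Ioo 0 1) := fun _ hs _ ht hst =>
  csInf_le_csInf (bddBelow_setOf_le_apply_of_tendsto hF hF0 hs.1)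
    ((nonempty_setOf_lt_apply_of_tendsto hF1 ht.2).mono (ofPred_subset_ofPred.2 fun _ => le_of_lt))
    fun _ hx => hst.trans hx

theorem StieltjesFunction.measure_Ioc_eq_volume_preimage (hF : Monotone F)
    (ψ : StieltjesFunction ℝ) {p q : ℝ} (hψp : ψ p = sInf {x | p < F x})
    (hψq : ψ q = sInf {x | q < F x}) (hpq : p ≤ q) (hbdd : BddBelow {x | p < F x})
    (hne : {x | q < F x}.Nonempty) :
    ψ.measure (Ioc p q) = volume (F ⁻¹' Ioc p q) := by
  have hpreimage : F ⁻¹' Ioc p q = {x | p < F x} \ {x | q < F x} := by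
    ext x
    simp [not_lt]
  have hupper : ∀ c, IsUpperSet {x | c < F x} := fun _ _ _ hxy hx => hx.trans_le (hF hxy)
  rw [ψ.measure_Ioc, hpreimage, (hupper p).volume_sdiff (hupper q)
    (fun _ hx => lt_of_le_of_lt hpq hx) hbdd hne, hψp, hψq]

theorem Measure.restrict_Ioo_eq_of_measure_Ioc_eq {μ ν : Measure ℝ} [IsLocallyFiniteMeasure μ]
    {a b : ℝ} (h : ∀ p q, a < p → p ≤ q → q < b → μ (Ioc p q) = ν (Ioc p q)) :
    μ.restrict (Ioo a b) = ν.restrict (Ioo a b) := by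
  rcases le_or_gt b a with hba | hab
  · simp [Ioo_eq_empty hba.not_gt]
  obtain ⟨u, hu, hua, hu_lim⟩ := exists_seq_strictAnti_tendsto' hab
  obtain ⟨v, hv, hvb, hv_lim⟩ := exists_seq_strictMono_tendsto' hab
  have hIoo : ⋃ n, Ioc (u n) (v n) = Ioo a b := by
    refine (iUnion_subset fun n x hx =>
      mem_Ioo.2 ⟨(hua n).1.trans hx.1, hx.2.trans_lt (hvb n).2⟩).antisymm ?_
    rw [← iUnion_Ioo_of_mono_of_isGLB_of_isLUB hu.antitone hv.monotone
      (isGLB_of_tendsto_atTop hu.antitone hu_lim) (isLUB_of_tendsto_atTop hv.monotone hv_lim)]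
    exact iUnion_mono fun n => Ioo_subset_Ioc_self
  refine Measure.ext_of_Ioc _ _ fun c d _ => ?_
  have hmono : Monotone fun n => Ioc (c ⊔ u n) (d ⊓ v n) :=
    (antitone_const.sup hu.antitone).Ioc (monotone_const.inf hv.monotone)
  simp only [Measure.restrict_apply measurableSet_Ioc, ← hIoo, inter_iUnion, Ioc_inter_Ioc]
  rw [hmono.measure_iUnion, hmono.measure_iUnion]
  refine iSup_congr fun n => ?_
  rcases le_or_gt (c ⊔ u n) (d ⊓ v n) with hle | hlt
  · exact h _ _ ((hua n).1.trans_le le_sup_right) hle (inf_le_right.trans_lt (hvb n).2)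
  · simp [Ioc_eq_empty hlt.not_gt]

theorem StieltjesFunction.restrict_Ioo_measure_eq_map (hF : Monotone F)
    (hF0 : Tendsto F atBot (nhds 0)) (hF1 : Tendsto F atTop (nhds 1))
    (ψ : StieltjesFunction ℝ) (hψ : ∀ t ∈ Ioo (0:ℝ) 1, ψ t = sInf {x | t < F x}) :
    ψ.measure.restrict (Ioo 0 1) = (volume.restrict (F ⁻¹' Ioo 0 1)).map F := by
  rw [← Measure.restrict_map hF.measurable measurableSet_Ioo]
  refine Measure.restrict_Ioo_eq_of_measure_Ioc_eq fun p q hp hpq hq => ?_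
  rw [Measure.map_apply hF.measurable measurableSet_Ioc]
  exact ψ.measure_Ioc_eq_volume_preimage hF (hψ p ⟨hp, hpq.trans_lt hq⟩)
    (hψ q ⟨hp.trans_le hpq, hq⟩) hpq
    ((bddBelow_setOf_le_apply_of_tendsto hF hF0 hp).mono (ofPred_subset_ofPred.2 fun _ => le_of_lt))
    (nonempty_setOf_lt_apply_of_tendsto hF1 hq)

end GeneralizedInverse

-- `ψ` is the right-continuous Stieltjes function agreeing with `F⁻¹` on `(0,1)`, and the
-- uniform variable `U` is evaluated at a fixed point `u₀`.
theorem stmt_13_general (F G : ℝ → ℝ)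
    (hFmono : Monotone F) (hFrc : ∀ x, ContinuousWithinAt F (Set.Ici x) x)
    (hF0 : Tendsto F atBot (nhds 0)) (hF1 : Tendsto F atTop (nhds 1))
    (hGmono : Monotone G)
    (hG0 : Tendsto G atBot (nhds 0)) (hG1 : Tendsto G atTop (nhds 1))
    (ψ : StieltjesFunction ℝ) (hψ : ∀ t ∈ Set.Ioo (0:ℝ) 1, ψ t = sInf {x | t < F x})
    (u₀ : ℝ) (hu₀ : u₀ ∈ Set.Ioo (0:ℝ) 1) :
    ∫ t in Set.Ioo (0:ℝ) 1,
        ((if u₀ ≤ t then (1:ℝ) else 0) - t) * sInf {x | t ≤ G x} ∂ψ.measure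
      = ∫ u, ((if sInf {x | u₀ ≤ F x} ≤ u then (1:ℝ) else 0) - F u)
          * sInf {x | F u ≤ G x} := by
  set f : ℝ → ℝ := fun t => ((if u₀ ≤ t then (1:ℝ) else 0) - t) * sInf {x | t ≤ G x}
  have hpush := ψ.restrict_Ioo_measure_eq_map hFmono hF0 hF1 hψ
  have hf : AEStronglyMeasurable f ((volume.restrict (F ⁻¹' Ioo 0 1)).map F) := by
    have hcoeff : Measurable fun t : ℝ => (if u₀ ≤ t then (1:ℝ) else 0) - t :=
      (measurable_const.ite (measurableSet_le measurable_const measurable_id)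
        measurable_const).sub measurable_id
    have hGinv : AEMeasurable (fun t => sInf {x | t ≤ G x}) (ψ.measure.restrict (Ioo 0 1)) :=
      aemeasurable_restrict_of_monotoneOn measurableSet_Ioo
        (monotoneOn_csInf_setOf_le_apply hGmono hG0 hG1)
    rw [← hpush]
    exact (hcoeff.aemeasurable.mul hGinv).aestronglyMeasurable
  have hvanish : ∀ u, u ∉ F ⁻¹' Ioo 0 1 → f (F u) = 0 := by
    intro u hu
    rcases (hFmono.le_of_tendsto hF0 u).eq_or_lt with h0 | h0
    · have huniv : {x | F u ≤ G x} = univ :=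
        eq_univ_of_forall fun x => h0 ▸ hGmono.le_of_tendsto hG0 x
      simp [f, huniv]
    · have h1 : F u = 1 :=
        (hFmono.ge_of_tendsto hF1 u).antisymm (not_lt.1 fun h1 => hu ⟨h0, h1⟩)
      simp [f, h1, hu₀.2.le]
  have hgalois : ∀ u, (u₀ ≤ F u ↔ sInf {x | u₀ ≤ F x} ≤ u) := fun u =>
    (csInf_setOf_le_apply_le_iff hFmono hFrc
      ((nonempty_setOf_lt_apply_of_tendsto hF1 hu₀.2).mono
        (ofPred_subset_ofPred.2 fun _ => le_of_lt))
      (bddBelow_setOf_le_apply_of_tendsto hFmono hF0 hu₀.1) u).symm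
  calc ∫ t in Ioo 0 1, f t ∂ψ.measure
      = ∫ u in F ⁻¹' Ioo 0 1, f (F u) := by
        rw [hpush, integral_map hFmono.measurable.aemeasurable hf]
    _ = ∫ u, f (F u) := setIntegral_eq_integral_of_forall_compl_eq_zero hvanish
    _ = _ := by
        congr 1 with u
        simp only [f, hgalois u]

/-- Change of variables for quantile integrals: with `ψ` the (right-continuous) Stieltjes
function agreeing with `F⁻¹` on `(0,1)`, for every `u₀ ∈ (0,1)` and `Y = F⁻¹(u₀)`,
`∫₀¹ [1{u₀ ≤ t} − t] G⁻¹(t) dF⁻¹(t) = ∫ℝ [1{Y ≤ u} − F(u)] G⁻¹(F(u)) du`. -/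
theorem stmt_13 (F G : ℝ → ℝ)
    (hFmono : Monotone F) (hFrc : ∀ x, ContinuousWithinAt F (Set.Ici x) x)
    (hF0 : Tendsto F atBot (nhds 0)) (hF1 : Tendsto F atTop (nhds 1))
    (hGmono : Monotone G) (hGrc : ∀ x, ContinuousWithinAt G (Set.Ici x) x)
    (hG0 : Tendsto G atBot (nhds 0)) (hG1 : Tendsto G atTop (nhds 1))
    (ψ : StieltjesFunction ℝ) (hψ : ∀ t ∈ Set.Ioo (0:ℝ) 1, ψ t = sInf {x | t < F x})
    (u₀ : ℝ) (hu₀ : u₀ ∈ Set.Ioo (0:ℝ) 1)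
    (hint : Integrable (fun u =>
      ((if sInf {x | u₀ ≤ F x} ≤ u then (1:ℝ) else 0) - F u) * sInf {x | F u ≤ G x})) :
    ∫ t in Set.Ioo (0:ℝ) 1,
        ((if u₀ ≤ t then (1:ℝ) else 0) - t) * sInf {x | t ≤ G x} ∂ψ.measure
      = ∫ u, ((if sInf {x | u₀ ≤ F x} ≤ u then (1:ℝ) else 0) - F u)
          * sInf {x | F u ≤ G x} :=
  stmt_13_general F G hFmono hFrc hF0 hF1 hGmono hG0 hG1 ψ hψ u₀ hu₀
end
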